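/- If a finite game structure G does not have recurring certainty, then there exists an ultimately periodic (lasso-shaped) play of G, i.e., a play of the form ρ · σ^ω for finite segments ρ and σ, at which the grand coalition attains certainty at only finitely many prefixes. -/

import Mathlib

/-- The state reached after following the word `w` (a list of (action profile, state) pairs)
starting from state `v`: the last state of `w`, or `v` if `w` is empty. -/
def endFrom {α V : Type} : V → List (α × V) → V
  | v, [] => v
  | _, p :: w => endFrom p.2 w

/-- An `n`-player game structure with imperfect information: states `V` with an initial state,
action sets `A i` for each player, a total move relation labelled by action profiles,
observation functions `obs i : V → B i` for each player, and the observation function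
`obs0 : V → B0` of the fictitious, less informed Player 0, which is a coarsening of
every player's observation. -/
structure GameStructure (n : ℕ) (V : Type) (A : Fin n → Type) (B : Fin n → Type)
    (B0 : Type) where
  init : V
  move : V → (∀ i, A i) → V → Prop
  move_total : ∀ v a, ∃ v', move v a v'
  obs : ∀ i : Fin n, V → B i
  obs0 : V → B0
  obs0_coarse : ∀ v v' : V, (∃ i, obs i v = obs i v') → obs0 v = obs0 v'

namespace GameStructure

variable {n : ℕ} {V : Type} {A : Fin n → Type} {B : Fin n → Type} {B0 : Type}

variable (G : GameStructure n V A B B0)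

/-- `G.IsHistFrom v w` holds if the word `w` describes a sequence of legal moves from `v`. -/
def IsHistFrom : V → List ((∀ i, A i) × V) → Prop
  | _, [] => True
  | v, p :: w => G.move v p.1 p.2 ∧ IsHistFrom p.2 w

/-- `w` encodes a history: a legal sequence of moves from the initial state.
The history `v₀ a₀ v₁ … a_{ℓ-1} v_ℓ` is encoded as the word `(a₀,v₁) … (a_{ℓ-1},v_ℓ)`. -/
def IsHistWord (w : List ((∀ i, A i) × V)) : Prop := G.IsHistFrom G.init w

/-- The final state of the history encoded by `w`. -/
def endState (w : List ((∀ i, A i) × V)) : V := endFrom G.init w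

/-- The sequence of Player 0's observations of the states of the history encoded by `w`
(the observation of the initial state is omitted, as it is fixed). Two histories are
`∼⁰`-indistinguishable iff their `obs0Trace`s are equal (which forces equal length). -/
def obs0Trace (w : List ((∀ i, A i) × V)) : List B0 := w.map fun p => G.obs0 p.2

/-- The grand coalition attains certainty at the history `w`: every history
`∼⁰`-indistinguishable from `w` ends at the same state. -/
def Certain (w : List ((∀ i, A i) × V)) : Prop :=
  ∀ w', G.IsHistWord w' → G.obs0Trace w' = G.obs0Trace w → G.endState w' = G.endState w

/-- A play: an infinite legal sequence of states and action profiles from the initial state. -/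
structure Play (G : GameStructure n V A B B0) where
  st : ℕ → V
  act : ℕ → ∀ i, A i
  init_eq : st 0 = G.init
  valid : ∀ k, G.move (st k) (act k) (st (k + 1))

/-- The word encoding the prefix history of length `ℓ` of the play `π`. -/
def Play.prefixWord {G : GameStructure n V A B B0} (π : G.Play) (ℓ : ℕ) :
    List ((∀ i, A i) × V) :=
  (List.range ℓ).map fun k => (π.act k, π.st (k + 1))

/-- The play `π` has recurring certainty: the grand coalition attains certainty at
infinitely many of its finite prefixes. -/
def Play.HasRecurringCertainty {G : GameStructure n V A B B0} (π : G.Play) : Prop :=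
  ∀ m : ℕ, ∃ ℓ, m ≤ ℓ ∧ G.Certain (π.prefixWord ℓ)

/-- The game structure `G` has recurring certainty: every play does. -/
def RecurringCertainty : Prop := ∀ π : G.Play, π.HasRecurringCertainty

/-- `G` has periodic certainty with bound `t`: along every play, every prefix history can be
extended by at most `t` further rounds, within the play, to a history at which the grand
coalition attains certainty. -/
def PeriodicWithBound (t : ℕ) : Prop :=
  ∀ π : G.Play, ∀ m : ℕ, ∃ ℓ, m ≤ ℓ ∧ ℓ ≤ m + t ∧ G.Certain (π.prefixWord ℓ)

/-- `G` has periodic certainty: periodic certainty with some uniform bound `t`. -/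
def PeriodicCertainty : Prop := ∃ t, G.PeriodicWithBound t

end GameStructure

/-- The `k`-th letter of the play `π`, viewed as the infinite word
`(a₀,v₁)(a₁,v₂)…` over the alphabet `A × V`. -/
def GameStructure.Play.letter {n : ℕ} {V : Type} {A : Fin n → Type} {B : Fin n → Type}
    {B0 : Type} {G : GameStructure n V A B B0} (π : G.Play) (k : ℕ) : (∀ i, A i) × V :=
  (π.act k, π.st (k + 1))

/-!
The grand coalition's knowledge after a history, the set of states consistent with its
observation trace, is updated deterministically by each new observation, and certainty at a
history means that this knowledge is contained in the singleton of the current state. Along a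
play that is certain at no prefix beyond `m`, the pair (state, knowledge) takes finitely many
values, so it repeats at two positions `a < a + p` with `m ≤ a`. Repeating rounds `a, …, a + p - 1`
forever is a legal lasso play whose pair at every position is the original pair at some position
`≥ a`, so it is certain at no prefix beyond `a`.
-/

theorem endFrom_append {α V : Type} (v : V) (w w' : List (α × V)) :
    endFrom v (w ++ w') = endFrom (endFrom v w) w' := by
  induction w generalizing v with
  | nil => rfl
  | cons p w ih => exact ih p.2

theorem Finite.exists_le_map_eq_map_add {X : Type} [Finite X] (f : ℕ → X) (m : ℕ) :
    ∃ a, m ≤ a ∧ ∃ p, 0 < p ∧ f a = f (a + p) := by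
  obtain ⟨a, ha, b, -, hab, hf⟩ :=
    (Set.Ici_infinite m).exists_lt_map_eq_of_mapsTo (Set.mapsTo_univ f _) Set.finite_univ
  exact ⟨a, ha, b - a, by omega, by rwa [Nat.add_sub_cancel' hab.le]⟩

namespace GameStructure

variable {n : ℕ} {V : Type} {A : Fin n → Type} {B : Fin n → Type} {B0 : Type}
variable (G : GameStructure n V A B B0)

def knowledge (t : List B0) : Set V :=
  {v | ∃ w, G.IsHistWord w ∧ G.obs0Trace w = t ∧ G.endState w = v}

def knowledgeStep (K : Set V) (b : B0) : Set V :=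
  {v' | ∃ v ∈ K, ∃ a, G.move v a v' ∧ G.obs0 v' = b}

theorem certain_iff_knowledge_subset (w : List ((∀ i, A i) × V)) :
    G.Certain w ↔ G.knowledge (G.obs0Trace w) ⊆ {G.endState w} := by
  constructor
  · rintro hw v ⟨w', hw', htr, rfl⟩
    exact hw w' hw' htr
  · intro hK w' hw' htr
    exact hK ⟨w', hw', htr, rfl⟩

theorem isHistFrom_append_singleton (v : V) (w : List ((∀ i, A i) × V))
    (p : (∀ i, A i) × V) :
    G.IsHistFrom v (w ++ [p]) ↔ G.IsHistFrom v w ∧ G.move (endFrom v w) p.1 p.2 := by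
  induction w generalizing v with
  | nil => simp [IsHistFrom, endFrom]
  | cons q w ih => simp only [List.cons_append, IsHistFrom, endFrom, ih, and_assoc]

theorem knowledge_append_singleton (t : List B0) (b : B0) :
    G.knowledge (t ++ [b]) = G.knowledgeStep (G.knowledge t) b := by
  ext v'
  constructor
  · rintro ⟨w, hw, htr, rfl⟩
    obtain rfl | ⟨w, p, rfl⟩ := w.eq_nil_or_concat
    · simp [obs0Trace] at htr
    · rw [List.concat_eq_append, obs0Trace, List.map_append] at htr
      obtain ⟨htr, hb⟩ := List.append_inj' htr rfl
      rw [IsHistWord, List.concat_eq_append, isHistFrom_append_singleton] at hw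
      refine ⟨G.endState w, ⟨w, hw.1, htr, rfl⟩, p.1, ?_, ?_⟩ <;>
        simp_all [endState, endFrom_append, endFrom]
  · rintro ⟨v, ⟨w, hw, rfl, rfl⟩, a, hmove, rfl⟩
    refine ⟨w ++ [(a, v')], ?_, by simp [obs0Trace], by simp [endState, endFrom_append, endFrom]⟩
    exact (G.isHistFrom_append_singleton _ _ _).2 ⟨hw, hmove⟩

namespace Play

variable {G}

def knowledge (π : G.Play) (ℓ : ℕ) : Set V := G.knowledge (G.obs0Trace (π.prefixWord ℓ))

theorem prefixWord_succ (π : G.Play) (ℓ : ℕ) :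
    π.prefixWord (ℓ + 1) = π.prefixWord ℓ ++ [π.letter ℓ] := by
  simp [prefixWord, letter, List.range_succ]

theorem endState_prefixWord (π : G.Play) (ℓ : ℕ) : G.endState (π.prefixWord ℓ) = π.st ℓ := by
  induction ℓ with
  | zero => simp [prefixWord, endState, endFrom, π.init_eq]
  | succ ℓ ih => rw [prefixWord_succ, endState, endFrom_append, ← endState, ih]; rfl

theorem knowledge_zero_eq (π π' : G.Play) : π.knowledge 0 = π'.knowledge 0 := by
  simp [knowledge, prefixWord]

theorem knowledge_succ (π : G.Play) (ℓ : ℕ) :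
    π.knowledge (ℓ + 1) = G.knowledgeStep (π.knowledge ℓ) (G.obs0 (π.st (ℓ + 1))) := by
  rw [knowledge, prefixWord_succ, obs0Trace, List.map_append, ← obs0Trace]
  exact G.knowledge_append_singleton _ _

theorem certain_prefixWord_iff (π : G.Play) (ℓ : ℕ) :
    G.Certain (π.prefixWord ℓ) ↔ π.knowledge ℓ ⊆ {π.st ℓ} := by
  rw [certain_iff_knowledge_subset, endState_prefixWord, knowledge]

end Play

end GameStructure

/-- The `ℓ`-th letter of `ρ σ σ σ …`, where `|ρ| = a` and `|σ| = p`, is the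
`lassoIndex a p ℓ`-th letter of `ρ σ`. -/
def lassoIndex (a p ℓ : ℕ) : ℕ := if ℓ < a then ℓ else a + (ℓ - a) % p

theorem lassoIndex_zero (a p : ℕ) : lassoIndex a p 0 = 0 := by
  simp [lassoIndex]

theorem le_lassoIndex {a p ℓ : ℕ} (h : a ≤ ℓ) : a ≤ lassoIndex a p ℓ := by
  simp [lassoIndex, Nat.not_lt.2 h]

theorem lassoIndex_add_period {a p ℓ : ℕ} (h : a ≤ ℓ) :
    lassoIndex a p (ℓ + p) = lassoIndex a p ℓ := by
  simp only [lassoIndex, Nat.not_lt.2 h, Nat.not_lt.2 (h.trans (Nat.le_add_right ℓ p)),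
    if_false, Nat.sub_add_comm h, Nat.add_mod_right]

theorem apply_lassoIndex_succ {X : Type} {f : ℕ → X} {a p : ℕ} (h : f a = f (a + p)) (ℓ : ℕ) :
    f (lassoIndex a p (ℓ + 1)) = f (lassoIndex a p ℓ + 1) := by
  unfold lassoIndex
  rcases lt_trichotomy (ℓ + 1) a with hlt | rfl | hgt
  · rw [if_pos hlt, if_pos (by omega)]
  · simp
  have hmod : (ℓ + 1 - a) % p = ((ℓ - a) % p + 1) % p := by
    rw [Nat.mod_add_mod, Nat.sub_add_comm (by omega)]
  rw [if_neg (by omega), if_neg (by omega), hmod]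
  obtain rfl | hp := p.eq_zero_or_pos
  · simp only [Nat.mod_zero, add_assoc]
  obtain hwrap | hlt := (Nat.add_one_le_of_lt (Nat.mod_lt (ℓ - a) hp)).eq_or_lt
  · rw [hwrap, Nat.mod_self, add_zero, add_assoc, hwrap, h]
  · rw [Nat.mod_eq_of_lt hlt, add_assoc]

namespace GameStructure.Play

variable {n : ℕ} {V : Type} {A : Fin n → Type} {B : Fin n → Type} {B0 : Type}
variable {G : GameStructure n V A B B0}

def lasso (π : G.Play) (a p : ℕ) (hst : π.st a = π.st (a + p)) : G.Play where
  st ℓ := π.st (lassoIndex a p ℓ)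
  act ℓ := π.act (lassoIndex a p ℓ)
  init_eq := by rw [lassoIndex_zero, π.init_eq]
  valid ℓ := by
    rw [apply_lassoIndex_succ (f := π.st) hst]
    exact π.valid _

variable (π : G.Play) {a p : ℕ} (hst : π.st a = π.st (a + p))

theorem lasso_letter (ℓ : ℕ) : (π.lasso a p hst).letter ℓ = π.letter (lassoIndex a p ℓ) := by
  simp only [letter, lasso, apply_lassoIndex_succ (f := π.st) hst]

theorem lasso_knowledge (hK : π.knowledge a = π.knowledge (a + p)) (ℓ : ℕ) :
    (π.lasso a p hst).knowledge ℓ = π.knowledge (lassoIndex a p ℓ) := by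
  induction ℓ with
  | zero => rw [lassoIndex_zero, knowledge_zero_eq]
  | succ ℓ ih =>
    rw [knowledge_succ, ih, apply_lassoIndex_succ hK, knowledge_succ]
    simp only [lasso, apply_lassoIndex_succ (f := π.st) hst]

theorem certain_lasso_prefixWord_iff (hK : π.knowledge a = π.knowledge (a + p)) (ℓ : ℕ) :
    G.Certain ((π.lasso a p hst).prefixWord ℓ) ↔ G.Certain (π.prefixWord (lassoIndex a p ℓ)) := by
  rw [certain_prefixWord_iff, certain_prefixWord_iff, lasso_knowledge π hst hK]
  rfl

end GameStructure.Play

theorem exists_lasso_play_of_not_recurringCertainty_general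
    {n : ℕ} {V : Type} {A : Fin n → Type} {B : Fin n → Type} {B0 : Type}
    [Fintype V]
    (G : GameStructure n V A B B0)
    (h : ¬ G.RecurringCertainty) :
    ∃ π : G.Play,
      (∃ (m k : ℕ), 0 < k ∧ ∀ ℓ, m ≤ ℓ → π.letter (ℓ + k) = π.letter ℓ) ∧
      (∃ m : ℕ, ∀ ℓ, m ≤ ℓ → ¬ G.Certain (π.prefixWord ℓ)) := by
  obtain ⟨π, m, hm⟩ : ∃ π : G.Play, ∃ m, ∀ ℓ, m ≤ ℓ → ¬ G.Certain (π.prefixWord ℓ) := by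
    simpa [GameStructure.RecurringCertainty, GameStructure.Play.HasRecurringCertainty] using h
  obtain ⟨a, ha, p, hp, hbelief⟩ :=
    Finite.exists_le_map_eq_map_add (fun ℓ => (π.st ℓ, π.knowledge ℓ)) m
  obtain ⟨hst, hK⟩ := Prod.ext_iff.mp hbelief
  refine ⟨π.lasso a p hst, ⟨a, p, hp, fun ℓ hℓ => ?_⟩, ⟨a, fun ℓ hℓ => ?_⟩⟩
  · rw [π.lasso_letter hst, π.lasso_letter hst, lassoIndex_add_period hℓ]
  · rw [π.certain_lasso_prefixWord_iff hst hK]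
    exact hm _ (ha.trans (le_lassoIndex hℓ))

/-- If a finite game structure does not have recurring certainty, then there is an ultimately
periodic (lasso-shaped) play — one whose infinite word over `A × V` has the form `ρ · σ^ω` —
at which the grand coalition attains certainty at only finitely many prefixes. -/
theorem exists_lasso_play_of_not_recurringCertainty
    {n : ℕ} {V : Type} {A : Fin n → Type} {B : Fin n → Type} {B0 : Type}
    (hn : 1 ≤ n) [Fintype V] [∀ i, Fintype (A i)] [∀ i, Nonempty (A i)]
    [∀ i, Fintype (B i)] [Fintype B0]
    (G : GameStructure n V A B B0)
    (h : ¬ G.RecurringCertainty) :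
    ∃ π : G.Play,
      (∃ (m k : ℕ), 0 < k ∧ ∀ ℓ, m ≤ ℓ → π.letter (ℓ + k) = π.letter ℓ) ∧
      (∃ m : ℕ, ∀ ℓ, m ≤ ℓ → ¬ G.Certain (π.prefixWord ℓ)) :=
  exists_lasso_play_of_not_recurringCertainty_general G h
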